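/- arXiv:1210.5532 — 2 statements merged into one kernel-verified Lean document; each statement's English description precedes it below -/
import Mathlib

section
/- Let 𝟙_H be the indicator function of the regular hexagon H with center 0 and circumradius 1, and let {𝟙_{H_i}} be the indicator functions of the hexagons of the half-scaled hexagonal tessellation in which the origin is a hexagon center. Then 𝟙_H is not equal (as a function, outside a measure-zero set) to any finite linear combination of the 𝟙_{H_i}. -/
/-!
The centre `c` of the half-scaled cell indexed by `(1, 0)` is the midpoint of an edge of `H`.
Near `c` this cell is the only cell present, since distinct half-lattice points are at sup-distance
at least `3/4` while every cell lies within `1/2` of its centre; hence every finite linear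
combination of the cell indicators is constant near `c`. But `𝟙_H` is `1` on the inner side of
that edge and `0` on the outer side, and a.e. equality forces equality somewhere in every ball.
-/

open Real MeasureTheory Metric

section
variable {E : Type*} [NormedAddCommGroup E] [NormedSpace ℝ E] {S : Set E}

theorem Convex.smul_mem_of_neg_mem (hS : Convex ℝ S) {u : E} (hu : u ∈ S) (hnu : -u ∈ S)
    {s : ℝ} (hs : |s| ≤ 1) : s • u ∈ S := by
  rw [abs_le] at hs
  convert hS hu hnu (a := (1 + s) / 2) (b := (1 - s) / 2) (by linarith) (by linarith) (by ring)
    using 1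
  rw [smul_neg, ← sub_eq_add_neg, ← sub_smul]
  ring_nf

theorem Convex.closedBall_subset_of_closedBall_zero_subset (hS : Convex ℝ S) {r t : ℝ}
    (hr : closedBall 0 r ⊆ S) {p : E} (hp : p ∈ S) (ht₀ : 0 < t) (ht₁ : t ≤ 1) :
    closedBall ((1 - t) • p) (t * r) ⊆ S := by
  intro y hy
  have hz : t⁻¹ • (y - (1 - t) • p) ∈ closedBall 0 r := by
    rw [mem_closedBall_zero_iff, norm_smul, norm_inv, Real.norm_of_nonneg ht₀.le,
      inv_mul_le_iff₀ ht₀, ← dist_eq_norm]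
    exact hy
  convert hS hp (hr hz) (sub_nonneg.2 ht₁) ht₀.le (by ring) using 1
  rw [smul_smul, mul_inv_cancel₀ ht₀.ne', one_smul, add_sub_cancel]

end

theorem mem_image_half_smul_add_iff {E : Type*} [AddCommGroup E] [Module ℝ E] {S : Set E}
    {c y : E} : y ∈ (fun x => (1/2 : ℝ) • x + c) '' S ↔ (2 : ℝ) • (y - c) ∈ S := by
  constructor
  · rintro ⟨x, hx, rfl⟩
    rwa [add_sub_cancel_right, smul_smul, show (2 : ℝ) * (1/2) = 1 by norm_num, one_smul]
  · intro hy
    refine ⟨_, hy, ?_⟩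
    dsimp only
    rw [smul_smul, show (1/2 : ℝ) * 2 = 1 by norm_num, one_smul, sub_add_cancel]

theorem sum_mul_indicator_congr {ι α R : Type*} [Semiring R] {C : ι → Set α} {y z : α}
    (h : ∀ i, y ∈ C i ↔ z ∈ C i) (s : Finset ι) (a : ι → R) :
    ∑ i ∈ s, a i * (C i).indicator (fun _ => 1) y =
      ∑ i ∈ s, a i * (C i).indicator (fun _ => 1) z := by
  classical
  simp only [Set.indicator_apply, h]

noncomputable def hexagonVertices : Set (Fin 2 → ℝ) :=
  {p | ∃ k : Fin 6, p = ![cos ((k : ℕ) * π / 3), sin ((k : ℕ) * π / 3)]}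

noncomputable def hexagon : Set (Fin 2 → ℝ) := convexHull ℝ hexagonVertices

theorem hexagonVertices_eq : hexagonVertices = Set.range
    ![![1, 0], ![1/2, √3/2], ![-(1/2), √3/2], ![-1, 0], ![-(1/2), -(√3/2)], ![1/2, -(√3/2)]] := by
  have hπ₂ : 2 * π / 3 = π - π / 3 := by ring
  have hπ₃ : 3 * π / 3 = π := by ring
  have hπ₄ : 4 * π / 3 = π / 3 + π := by ring
  have hπ₅ : 5 * π / 3 = -(π / 3) + 2 * π := by ring
  ext p
  simp only [hexagonVertices, Set.mem_range]
  refine exists_congr fun k => ?_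
  rw [eq_comm]
  fin_cases k <;> norm_num [hπ₂, hπ₃, hπ₄, hπ₅, cos_pi_sub, sin_pi_sub, cos_add_pi, sin_add_pi]

theorem convex_hexagon : Convex ℝ hexagon := convex_convexHull ℝ _

theorem hexagon_subset_closedBall : hexagon ⊆ closedBall 0 1 := by
  refine convexHull_min ?_ (convex_closedBall 0 1)
  rintro _ ⟨k, rfl⟩
  simp [pi_norm_le_iff_of_nonneg, Fin.forall_fin_two, abs_cos_le_one, abs_sin_le_one]

theorem hexagon_subset_halfSpace : hexagon ⊆ {y | √3 * y 0 + y 1 ≤ √3} := by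
  have hlin : IsLinearMap ℝ fun y : Fin 2 → ℝ => √3 * y 0 + y 1 :=
    ⟨fun y z => by simp only [Pi.add_apply]; ring,
      fun c y => by simp only [Pi.smul_apply, smul_eq_mul]; ring⟩
  refine convexHull_min ?_ (convex_halfSpace_le hlin _)
  have h3 : 0 ≤ √3 := sqrt_nonneg 3
  rw [hexagonVertices_eq]
  rintro _ ⟨k, rfl⟩
  fin_cases k <;> norm_num <;> linarith

theorem hexagon_vertex₀ : ![1, 0] ∈ hexagon :=
  subset_convexHull ℝ _ (hexagonVertices_eq ▸ ⟨0, rfl⟩)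

theorem hexagon_vertex₁ : ![1/2, √3/2] ∈ hexagon :=
  subset_convexHull ℝ _ (hexagonVertices_eq ▸ ⟨1, rfl⟩)

theorem neg_hexagon_vertex₀ : -![1, 0] ∈ hexagon :=
  subset_convexHull ℝ _ (hexagonVertices_eq ▸ ⟨3, by simp⟩)

theorem neg_hexagon_vertex₁ : -![1/2, √3/2] ∈ hexagon :=
  subset_convexHull ℝ _ (hexagonVertices_eq ▸ ⟨4, by simp⟩)

theorem closedBall_subset_hexagon : closedBall 0 (1/4) ⊆ hexagon := by
  intro y hy
  have h3 : 1 ≤ √3 := one_le_sqrt.2 (by norm_num)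
  rw [mem_closedBall_zero_iff, pi_norm_le_iff_of_nonneg (by norm_num), Fin.forall_fin_two] at hy
  obtain ⟨hy₀, hy₁⟩ := hy
  rw [Real.norm_eq_abs] at hy₀ hy₁
  have hu : |y 1 / √3| ≤ 1/4 := by
    rw [abs_div, abs_of_pos (by positivity : (0:ℝ) < √3), div_le_iff₀ (by positivity)]
    nlinarith
  have hs : |2 * y 0 - 2 * (y 1 / √3)| ≤ 1 :=
    (abs_sub _ _).trans (by rw [abs_mul, abs_mul, abs_two]; linarith)
  have ht : |4 * (y 1 / √3)| ≤ 1 := by rw [abs_mul, abs_of_pos four_pos]; linarith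
  convert convex_hexagon
    (convex_hexagon.smul_mem_of_neg_mem hexagon_vertex₀ neg_hexagon_vertex₀ hs)
    (convex_hexagon.smul_mem_of_neg_mem hexagon_vertex₁ neg_hexagon_vertex₁ ht)
    (a := 1/2) (b := 1/2) (by norm_num) (by norm_num) (by norm_num) using 1
  ext i
  fin_cases i <;>
    simp only [Fin.zero_eta, Fin.mk_one, Pi.add_apply, Pi.smul_apply, smul_eq_mul,
      Matrix.cons_val_zero, Matrix.cons_val_one, Matrix.cons_val_fin_one] <;>
    field_simp <;> ring

noncomputable def halfLatticePoint (p : ℤ × ℤ) : Fin 2 → ℝ :=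
  ((p.1 : ℝ) / 2) • ![3/2, √3/2] + ((p.2 : ℝ) / 2) • ![3/2, -(√3/2)]

noncomputable def halfCell (p : ℤ × ℤ) : Set (Fin 2 → ℝ) :=
  (fun x => (1/2 : ℝ) • x + ((p.1 : ℝ) / 2) • ![3/2, √3/2] + ((p.2 : ℝ) / 2) • ![3/2, -(√3/2)]) ''
    hexagon

theorem halfLatticePoint_apply_zero (p : ℤ × ℤ) : halfLatticePoint p 0 = 3/4 * (p.1 + p.2) := by
  simp only [halfLatticePoint, Pi.add_apply, Pi.smul_apply, smul_eq_mul, Matrix.cons_val_zero]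
  ring

theorem halfLatticePoint_apply_one (p : ℤ × ℤ) :
    halfLatticePoint p 1 = √3/4 * (p.1 - p.2) := by
  simp only [halfLatticePoint, Pi.add_apply, Pi.smul_apply, smul_eq_mul, Matrix.cons_val_one,
    Matrix.cons_val_fin_one]
  ring

theorem mem_halfCell_iff {p : ℤ × ℤ} {y : Fin 2 → ℝ} :
    y ∈ halfCell p ↔ (2 : ℝ) • (y - halfLatticePoint p) ∈ hexagon := by
  simp only [halfCell, halfLatticePoint, add_assoc]
  exact mem_image_half_smul_add_iff

theorem closedBall_subset_halfCell (p : ℤ × ℤ) :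
    closedBall (halfLatticePoint p) (1/8) ⊆ halfCell p := by
  intro y hy
  rw [mem_halfCell_iff]
  refine closedBall_subset_hexagon ?_
  rw [mem_closedBall_zero_iff, norm_smul, Real.norm_two, ← dist_eq_norm]
  rw [mem_closedBall] at hy
  linarith

theorem dist_halfLatticePoint_le_of_mem_halfCell {p : ℤ × ℤ} {y : Fin 2 → ℝ}
    (hy : y ∈ halfCell p) : dist y (halfLatticePoint p) ≤ 1/2 := by
  have := hexagon_subset_closedBall (mem_halfCell_iff.1 hy)
  rw [mem_closedBall_zero_iff, norm_smul, Real.norm_two, ← dist_eq_norm] at this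
  linarith

theorem eq_of_dist_halfLatticePoint_lt {p q : ℤ × ℤ}
    (h : dist (halfLatticePoint p) (halfLatticePoint q) < 3/4) : p = q := by
  have h₀ := (dist_le_pi_dist _ _ 0).trans_lt h
  have h₁ := (dist_le_pi_dist _ _ 1).trans_lt h
  rw [Real.dist_eq, halfLatticePoint_apply_zero, halfLatticePoint_apply_zero, abs_lt] at h₀
  rw [Real.dist_eq, halfLatticePoint_apply_one, halfLatticePoint_apply_one, abs_lt] at h₁
  have h3 : √3 < 2 := by rw [sqrt_lt' two_pos]; norm_num
  have h3' : 3/2 < √3 := by rw [lt_sqrt (by norm_num)]; norm_num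
  have hk : |p.1 + p.2 - (q.1 + q.2)| < 1 := by
    rw [← Int.cast_lt (R := ℝ), Int.cast_abs, abs_lt]; push_cast; constructor <;> linarith
  have hm : |p.1 - p.2 - (q.1 - q.2)| < 2 := by
    rw [← Int.cast_lt (R := ℝ), Int.cast_abs, abs_lt]; push_cast; constructor <;> nlinarith
  rw [abs_lt] at hk hm
  -- `p.1 + p.2` and `p.1 - p.2` have the same parity, so `|Δ(p.1 - p.2)| ≤ 1` forces it to be `0`
  ext <;> omega

theorem mem_halfCell_iff_of_dist_lt {p q : ℤ × ℤ} {y : Fin 2 → ℝ}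
    (hy : dist y (halfLatticePoint p) < 1/8) : y ∈ halfCell q ↔ q = p := by
  constructor
  · intro hq
    refine eq_of_dist_halfLatticePoint_lt ?_
    calc dist (halfLatticePoint q) (halfLatticePoint p)
        ≤ dist y (halfLatticePoint q) + dist y (halfLatticePoint p) := dist_triangle_left _ _ _
      _ < 3/4 := by linarith [dist_halfLatticePoint_le_of_mem_halfCell hq]
  · rintro rfl
    exact closedBall_subset_halfCell _ (mem_closedBall.2 hy.le)

theorem halfLatticePoint_one_zero_mem_hexagon : halfLatticePoint (1, 0) ∈ hexagon := by
  convert convex_hexagon hexagon_vertex₀ hexagon_vertex₁ (a := 1/2) (b := 1/2)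
    (by norm_num) (by norm_num) (by norm_num) using 1
  ext i
  fin_cases i <;> norm_num [halfLatticePoint]

theorem ball_smul_halfLatticePoint_subset {t : ℝ} (ht : |t - 1| ≤ 1/10) :
    ball (t • halfLatticePoint (1, 0)) (1/40) ⊆ ball (halfLatticePoint (1, 0)) (1/8) := by
  refine ball_subset_ball' ?_
  have hc := hexagon_subset_closedBall halfLatticePoint_one_zero_mem_hexagon
  rw [mem_closedBall_zero_iff] at hc
  rw [dist_eq_norm, ← one_smul ℝ (halfLatticePoint (1, 0)), smul_smul, mul_one, ← sub_smul,
    norm_smul, Real.norm_eq_abs]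
  nlinarith [abs_nonneg (t - 1), norm_nonneg (halfLatticePoint (1, 0))]

theorem ball_subset_hexagon : ball ((9/10 : ℝ) • halfLatticePoint (1, 0)) (1/40) ⊆ hexagon := by
  have h := convex_hexagon.closedBall_subset_of_closedBall_zero_subset closedBall_subset_hexagon
    halfLatticePoint_one_zero_mem_hexagon (t := 1/10) (by norm_num) (by norm_num)
  norm_num at h
  exact ball_subset_closedBall.trans h

theorem disjoint_ball_hexagon :
    Disjoint (ball ((11/10 : ℝ) • halfLatticePoint (1, 0)) (1/40)) hexagon := by
  refine Set.disjoint_left.2 fun y hy hyH => ?_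
  have h₀ := (dist_le_pi_dist _ _ 0).trans_lt hy
  have h₁ := (dist_le_pi_dist _ _ 1).trans_lt hy
  simp only [Pi.smul_apply, smul_eq_mul, halfLatticePoint_apply_zero,
    halfLatticePoint_apply_one, Real.dist_eq, abs_lt] at h₀ h₁
  push_cast at h₀ h₁
  have h3 : 1 ≤ √3 := one_le_sqrt.2 (by norm_num)
  have : √3 * y 0 + y 1 ≤ √3 := hexagon_subset_halfSpace hyH
  nlinarith

/-- Non-refinability of the indicator of the hexagonal Voronoi cell: the indicator
function of the regular hexagon `H` (circumradius 1, Voronoi cell at `0` of the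
lattice generated by `g₁ = (3/2, √3/2)` and `g₂ = (3/2, −√3/2)`) is not
Lebesgue-a.e. equal to any finite linear combination of indicator functions of the
cells of the half-scaled hexagonal tessellation. -/
theorem stmt9
    (g₁ g₂ : Fin 2 → ℝ)
    (hg₁ : g₁ = ![3/2, Real.sqrt 3 / 2]) (hg₂ : g₂ = ![3/2, -(Real.sqrt 3 / 2)])
    (H : Set (Fin 2 → ℝ))
    (hH : H = convexHull ℝ
      {p | ∃ k : Fin 6, p = ![Real.cos ((k : ℕ) * π / 3), Real.sin ((k : ℕ) * π / 3)]})
    (cell : ℤ × ℤ → Set (Fin 2 → ℝ))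
    (hcell : cell = fun p =>
      (fun x => (1/2 : ℝ) • x + ((p.1 : ℝ) / 2) • g₁ + ((p.2 : ℝ) / 2) • g₂) '' H) :
    ∀ (s : Finset (ℤ × ℤ)) (a : ℤ × ℤ → ℝ),
      ¬ (Set.indicator H (fun _ => (1 : ℝ)) =ᵐ[volume]
          fun x => ∑ p ∈ s, a p * Set.indicator (cell p) (fun _ => (1 : ℝ)) x) := by
  subst hg₁ hg₂ hH hcell
  intro s a h
  change hexagon.indicator _ =ᵐ[volume] fun x => ∑ p ∈ s, a p * (halfCell p).indicator _ x at h
  set c := halfLatticePoint (1, 0)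
  have hgood (x : Fin 2 → ℝ) := (Measure.dense_of_ae h).exists_mem_open (isOpen_ball (x := x))
    (nonempty_ball.2 (by norm_num : (0 : ℝ) < 1/40))
  obtain ⟨y₁, hy₁, hy₁c⟩ := hgood ((9/10 : ℝ) • c)
  obtain ⟨y₂, hy₂, hy₂c⟩ := hgood ((11/10 : ℝ) • c)
  have hsame : ∀ q, y₁ ∈ halfCell q ↔ y₂ ∈ halfCell q := fun q => by
    rw [mem_halfCell_iff_of_dist_lt (ball_smul_halfLatticePoint_subset (by norm_num) hy₁c),
      mem_halfCell_iff_of_dist_lt (ball_smul_halfLatticePoint_subset (by norm_num) hy₂c)]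
  have key : hexagon.indicator (fun _ => (1 : ℝ)) y₁ = hexagon.indicator (fun _ => 1) y₂ :=
    hy₁.out.trans ((sum_mul_indicator_congr hsame s a).trans hy₂.out.symm)
  rw [Set.indicator_of_mem (ball_subset_hexagon hy₁c),
    Set.indicator_of_notMem (disjoint_ball_hexagon.notMem_of_mem_left hy₂c)] at key
  exact one_ne_zero key
end

section
/- Let T be a polyhedral tessellation of ℝⁿ and T¹ a refinement candidate tessellation. If some cell c¹ of T¹ straddles a facet f of a cell c of T (i.e., there exist p ∈ f, a unit normal ν to f at p, and ε > 0 with p + εν ∈ interior(c¹) and p − εν ∈ interior(c¹)), then the indicator function of c is not Lebesgue-almost-everywhere equal to any finite linear combination of indicator functions of cells of T¹. -/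
/-!
Inside the straddling cell `T₁ k`, every other cell of `T₁` meets `interior (T₁ k)` only in its
frontier, which is Lebesgue-null since the cells are convex; so any finite combination of cell
indicators of `T₁` is a.e. constant on `interior (T₁ k)`. The indicator of `T i`, however, is `1`
on the open set `interior (T₁ k) ∩ interior (T i)` and a.e. `0` on the open set
`interior (T₁ k) ∩ interior (T j)`, both nonempty and hence of positive measure.
-/

open MeasureTheory Filter

theorem IsOpen.exists_mem_of_ae_restrict {α : Type*} [TopologicalSpace α] [MeasurableSpace α]
    [OpensMeasurableSpace α] {μ : Measure α} [μ.IsOpenPosMeasure] {U : Set α} (hU : IsOpen U)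
    (hne : U.Nonempty) {P : α → Prop} (h : ∀ᵐ x ∂μ.restrict U, P x) : ∃ x ∈ U, P x :=
  haveI : (ae (μ.restrict U)).NeBot := ae_restrict_neBot.2 (hU.measure_ne_zero μ hne)
  ((ae_restrict_mem hU.measurableSet).and h).exists

section Convex

variable {E : Type*} [NormedAddCommGroup E] [NormedSpace ℝ E] [MeasurableSpace E] [BorelSpace E]
  [FiniteDimensional ℝ E] (μ : Measure E) [μ.IsAddHaarMeasure]

theorem Convex.indicator_one_ae_eq_zero_of_interior_disjoint {A B : Set E} (hA : Convex ℝ A)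
    (hAB : interior A ∩ interior B = ∅) :
    A.indicator (fun _ => (1 : ℝ)) =ᵐ[μ.restrict (interior B)] 0 := by
  have hfr : ∀ᵐ x ∂μ.restrict (interior B), x ∉ frontier A :=
    ae_restrict_of_ae (measure_eq_zero_iff_ae_notMem.1 (hA.addHaar_frontier μ))
  filter_upwards [hfr, ae_restrict_mem isOpen_interior.measurableSet] with x hxA hxB
  refine Set.indicator_of_notMem (fun hx => ?_) _
  have hx_int : x ∈ interior A := by
    by_contra h
    exact hxA ⟨subset_closure hx, h⟩
  exact hAB.subset ⟨hx_int, hxB⟩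

theorem exists_sum_indicator_ae_eq_const_on_interior {ι : Type*} {S : ι → Set E}
    (hconv : ∀ m, Convex ℝ (S m)) (hdisj : Pairwise fun k l => interior (S k) ∩ interior (S l) = ∅)
    (s : Finset ι) (a : ι → ℝ) (k : ι) :
    ∃ c : ℝ, (fun x => ∑ m ∈ s, a m * (S m).indicator (fun _ => (1 : ℝ)) x)
      =ᵐ[μ.restrict (interior (S k))] fun _ => c := by
  classical
  refine ⟨∑ m ∈ s, a m * if m = k then 1 else 0, ?_⟩
  have hterm : ∀ m ∈ s, ∀ᵐ x ∂μ.restrict (interior (S k)),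
      (S m).indicator (fun _ => (1 : ℝ)) x = if m = k then 1 else 0 := by
    intro m _
    by_cases hmk : m = k
    · subst hmk
      filter_upwards [ae_restrict_mem isOpen_interior.measurableSet] with x hx
      simp [Set.indicator_of_mem (interior_subset hx)]
    · filter_upwards [(hconv m).indicator_one_ae_eq_zero_of_interior_disjoint μ (hdisj hmk)]
        with x hx
      simpa [hmk] using hx
  filter_upwards [(eventually_all_finset s).2 hterm] with x hx
  exact Finset.sum_congr rfl fun m hm => by rw [hx m hm]

end Convex

theorem stmt10_general (n : ℕ) (ι ι' : Type)
    (T : ι → Set (EuclideanSpace ℝ (Fin n)))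
    (T₁ : ι' → Set (EuclideanSpace ℝ (Fin n)))
    (hTconv : ∀ i, Convex ℝ (T i))
    (hTdisj : Pairwise fun i j => interior (T i) ∩ interior (T j) = ∅)
    (hT₁conv : ∀ k, Convex ℝ (T₁ k))
    (hT₁disj : Pairwise fun k l => interior (T₁ k) ∩ interior (T₁ l) = ∅)
    (i j : ι) (hij : i ≠ j) (k : ι')
    (p ν : EuclideanSpace ℝ (Fin n)) (ε : ℝ)
    (h₁ : p + ε • ν ∈ interior (T₁ k)) (h₂ : p - ε • ν ∈ interior (T₁ k))
    (h₃ : p + ε • ν ∈ interior (T i)) (h₄ : p - ε • ν ∈ interior (T j)) :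
    ∀ (s : Finset ι') (a : ι' → ℝ),
      ¬ (Set.indicator (T i) (fun _ => (1 : ℝ)) =ᵐ[volume]
          fun x => ∑ m ∈ s, a m * Set.indicator (T₁ m) (fun _ => (1 : ℝ)) x) := by
  intro s a h
  obtain ⟨c, hc⟩ := exists_sum_indicator_ae_eq_const_on_interior volume hT₁conv hT₁disj s a k
  have hf : Set.indicator (T i) (fun _ => (1 : ℝ)) =ᵐ[volume.restrict (interior (T₁ k))]
      fun _ => c := (h.filter_mono ae_restrict_le).trans hc
  obtain ⟨x, hx, hfx⟩ := (isOpen_interior.inter isOpen_interior).exists_mem_of_ae_restrict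
    ⟨_, h₁, h₃⟩ (ae_restrict_of_ae_restrict_of_subset Set.inter_subset_left hf)
  obtain ⟨y, hy, hfy, hfy₀⟩ := (isOpen_interior.inter isOpen_interior).exists_mem_of_ae_restrict
    ⟨_, h₂, h₄⟩ ((ae_restrict_of_ae_restrict_of_subset Set.inter_subset_left hf).and
      (ae_restrict_of_ae_restrict_of_subset Set.inter_subset_right
        ((hTconv i).indicator_one_ae_eq_zero_of_interior_disjoint volume (hTdisj hij))))
  have hc₁ : c = 1 := hfx.symm.trans (Set.indicator_of_mem (interior_subset hx.2) _)
  have hc₀ : c = 0 := hfy.symm.trans hfy₀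
  exact one_ne_zero (hc₁.symm.trans hc₀)

/-- If a cell `T₁ k` of a refinement-candidate tessellation straddles a facet of a
cell `T i` of a polyhedral tessellation `T` (there are `p`, a unit normal `ν` and
`ε > 0` with `p ± εν` in the interior of `T₁ k`, `p + εν` in the interior of `T i`
and `p − εν` in the interior of the adjacent cell `T j`), then the indicator
function of `T i` is not a.e. equal to any finite linear combination of indicator
functions of cells of `T₁`. -/
theorem stmt10 (n : ℕ) (ι ι' : Type)
    (T : ι → Set (EuclideanSpace ℝ (Fin n)))
    (T₁ : ι' → Set (EuclideanSpace ℝ (Fin n)))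
    (hTclosed : ∀ i, IsClosed (T i)) (hTconv : ∀ i, Convex ℝ (T i))
    (hTbdd : ∀ i, Bornology.IsBounded (T i))
    (hTint : ∀ i, (interior (T i)).Nonempty)
    (hTcover : ⋃ i, T i = Set.univ)
    (hTdisj : Pairwise fun i j => interior (T i) ∩ interior (T j) = ∅)
    (hT₁closed : ∀ k, IsClosed (T₁ k)) (hT₁conv : ∀ k, Convex ℝ (T₁ k))
    (hT₁bdd : ∀ k, Bornology.IsBounded (T₁ k))
    (hT₁int : ∀ k, (interior (T₁ k)).Nonempty)
    (hT₁cover : ⋃ k, T₁ k = Set.univ)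
    (hT₁disj : Pairwise fun k l => interior (T₁ k) ∩ interior (T₁ l) = ∅)
    (i j : ι) (hij : i ≠ j) (k : ι')
    (p ν : EuclideanSpace ℝ (Fin n)) (ε : ℝ) (hν : ‖ν‖ = 1) (hε : 0 < ε)
    (h₁ : p + ε • ν ∈ interior (T₁ k)) (h₂ : p - ε • ν ∈ interior (T₁ k))
    (h₃ : p + ε • ν ∈ interior (T i)) (h₄ : p - ε • ν ∈ interior (T j)) :
    ∀ (s : Finset ι') (a : ι' → ℝ),
      ¬ (Set.indicator (T i) (fun _ => (1 : ℝ)) =ᵐ[volume]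
          fun x => ∑ m ∈ s, a m * Set.indicator (T₁ m) (fun _ => (1 : ℝ)) x) :=
  stmt10_general n ι ι' T T₁ hTconv hTdisj hT₁conv hT₁disj i j hij k p ν ε h₁ h₂ h₃ h₄
end
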